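/- Every idempotent ε of the semigroup 𝐈ℕ∞ is the unit of a subsemigroup of 𝐈ℕ∞ that is isomorphic to the bicyclic semigroup; explicitly, there exists γ ∈ 𝐈ℕ∞ with γγ⁻¹ = ε and γ⁻¹γ ≠ ε such that the subsemigroup generated by γ and γ⁻¹ is isomorphic to the bicyclic monoid with identity ε. -/

import Mathlib

/-- Partial transformations of the set ℕ of positive integers. -/
abbrev PMapN : Type := ℕ+ → Option ℕ+

/-- The domain of a partial transformation. -/
def pdom (f : PMapN) : Set ℕ+ := {n | f n ≠ none}

/-- The range of a partial transformation. -/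
def pran (f : PMapN) : Set ℕ+ := {m | ∃ n, f n = some m}

/-- Composition of partial transformations: `pmul f g` applies `g` first and then `f`. -/
def pmul (f g : PMapN) : PMapN := fun n => (g n).bind f

/-- The identity transformation 𝕀 of ℕ. -/
def pid : PMapN := fun n => some n

/-- `f` is a partial bijection (an injective partial map). -/
def IsPartialBij (f : PMapN) : Prop :=
  ∀ ⦃m n a⦄, f m = some a → f n = some a → m = n

/-- `f` is a partial isometry with respect to the metric `d(m, n) = |m - n|`. -/
def IsIsometry (f : PMapN) : Prop :=
  ∀ ⦃m n a b⦄, f m = some a → f n = some b →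
    |((a : ℕ) : ℤ) - ((b : ℕ) : ℤ)| = |((m : ℕ) : ℤ) - ((n : ℕ) : ℤ)|

/-- Membership in the inverse monoid `𝐈ℕ∞` of partial cofinite isometries of ℕ:
a partial bijection of ℕ with cofinite domain and cofinite range preserving distances. -/
def InIN (f : PMapN) : Prop :=
  IsPartialBij f ∧ (pdom f)ᶜ.Finite ∧ (pran f)ᶜ.Finite ∧ IsIsometry f

open Classical in
/-- The inverse of a partial bijection. -/
noncomputable def pinv (f : PMapN) : PMapN := fun m =>
  if h : ∃ n, f n = some m then some h.choose else none

/-- Membership in the subsemigroup of `𝐈ℕ∞` generated by `γ` and `γ⁻¹`. -/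
inductive GenBy (γ : PMapN) : PMapN → Prop
  | base : GenBy γ γ
  | inv : GenBy γ (pinv γ)
  | mul : ∀ f g, GenBy γ f → GenBy γ g → GenBy γ (pmul f g)

/-- The bicyclic monoid `𝒞(p,q) = ⟨p, q ∣ pq = 1⟩`, realized on `ℕ × ℕ` via the normal
forms `q^i p^j`: `(q^a p^b)(q^c p^d) = q^(a + c - min b c) p^(b + d - min b c)`. -/
def bmul : ℕ × ℕ → ℕ × ℕ → ℕ × ℕ := fun x y =>
  (x.1 + y.1 - min x.2 y.1, x.2 + y.2 - min x.2 y.1)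

/-!
An idempotent of `𝐈ℕ∞` is the identity map of its (cofinite) domain `D`. Pick `c` so large that
every `m ≥ c` lies in `D`; then `D + c ⊆ D`, and the translation `γ : m + c ↦ m` (for `m ∈ D`)
lies in `𝐈ℕ∞`. The element `q^a p^b` of the bicyclic monoid is sent to the translation
`m + b c ↦ m + a c` (for `m ∈ D`); composing two translations of this shape gives the bicyclic
multiplication rule, because `D` is closed under adding multiples of `c`, and the least element of
`D` separates translations by different amounts.
-/

lemma pmap_ext {f g : PMapN} (h : ∀ n v, f n = some v ↔ g n = some v) : f = g :=
  funext fun n => Option.ext (h n)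

lemma pmul_eq_some {f g : PMapN} {n v : ℕ+} :
    pmul f g n = some v ↔ ∃ w, g n = some w ∧ f w = some v :=
  Option.bind_eq_some_iff

lemma pinv_eq_some {f : PMapN} (hf : IsPartialBij f) {m n : ℕ+} :
    pinv f m = some n ↔ f n = some m := by
  unfold pinv
  split_ifs with h
  · rw [Option.some_inj]
    exact ⟨fun hn => hn ▸ h.choose_spec, fun hn => hf h.choose_spec hn⟩
  · exact ⟨fun hn => (nomatch hn), fun hn => absurd ⟨n, hn⟩ h⟩

lemma pdom_pinv (f : PMapN) : pdom (pinv f) = pran f := by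
  ext m
  simp only [pdom, pran, pinv, Set.mem_ofPred_eq]
  split_ifs with h <;> simpa using h

lemma IsPartialBij.eq_of_idempotent {f : PMapN} (hf : IsPartialBij f) (he : pmul f f = f)
    {n v : ℕ+} (hn : f n = some v) : v = n := by
  obtain ⟨w, hw, hwv⟩ := pmul_eq_some.mp ((congrFun he n).trans hn)
  obtain rfl : w = v := Option.some_inj.mp (hw.symm.trans hn)
  exact hf hwv hn

open Classical in
/-- The translation `m + s ↦ m + t` of `ℕ`, defined for `m ∈ D`. -/
noncomputable def shiftOn (D : Set ℕ+) (s t : ℕ) : PMapN := fun n =>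
  if h : ∃ m ∈ D, (n : ℕ) = m + s then
    some (⟨h.choose + t, h.choose.pos.trans_le (Nat.le_add_right _ _)⟩ : ℕ+)
  else none

def ShiftClosed (D : Set ℕ+) (k : ℕ) : Prop :=
  ∀ m ∈ D, ∃ x ∈ D, (x : ℕ) = m + k

section shiftOn

variable {D : Set ℕ+} {s t : ℕ}

lemma shiftOn_eq_some {n v : ℕ+} :
    shiftOn D s t n = some v ↔ ∃ m ∈ D, (n : ℕ) = m + s ∧ (v : ℕ) = m + t := by
  unfold shiftOn
  split_ifs with h
  · obtain ⟨hm, hn⟩ := h.choose_spec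
    constructor
    · intro hv
      exact ⟨h.choose, hm, hn, by rw [← Option.some_inj.mp hv, PNat.mk_coe]⟩
    · rintro ⟨m, -, hn', hv⟩
      exact congrArg some (PNat.eq (by rw [PNat.mk_coe]; omega))
  · exact ⟨fun hv => (nomatch hv), fun ⟨m, hm, hn, _⟩ => absurd ⟨m, hm, hn⟩ h⟩

lemma shiftOn_isPartialBij : IsPartialBij (shiftOn D s t) := by
  intro m n a hm hn
  obtain ⟨x, -, hxm, hxa⟩ := shiftOn_eq_some.mp hm
  obtain ⟨y, -, hyn, hya⟩ := shiftOn_eq_some.mp hn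
  exact PNat.coe_injective (by omega)

lemma shiftOn_isIsometry : IsIsometry (shiftOn D s t) := by
  intro m n a b hm hn
  obtain ⟨x, -, hxm, hxa⟩ := shiftOn_eq_some.mp hm
  obtain ⟨y, -, hyn, hyb⟩ := shiftOn_eq_some.mp hn
  rw [hxm, hyn, hxa, hyb]
  congr 1
  push_cast
  ring

lemma pinv_shiftOn : pinv (shiftOn D s t) = shiftOn D t s :=
  pmap_ext fun n v => by
    rw [pinv_eq_some shiftOn_isPartialBij, shiftOn_eq_some, shiftOn_eq_some]
    exact exists_congr fun m => and_congr_right fun _ => and_comm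

lemma mem_pdom_shiftOn {n : ℕ+} : n ∈ pdom (shiftOn D s t) ↔ ∃ m ∈ D, (n : ℕ) = m + s := by
  simp only [pdom, Set.mem_ofPred_eq, shiftOn]
  split_ifs with h <;> simp [h]

lemma compl_pdom_shiftOn_finite {c : ℕ} (hD : ∀ m : ℕ+, c ≤ (m : ℕ) → m ∈ D) :
    (pdom (shiftOn D s t))ᶜ.Finite := by
  refine ((Set.finite_Iic (c + s)).preimage PNat.coe_injective.injOn).subset fun n hn => ?_
  by_contra hlarge
  simp only [Set.mem_preimage, Set.mem_Iic, not_le] at hlarge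
  exact hn (mem_pdom_shiftOn.mpr ⟨⟨n - s, by omega⟩, hD _ (by simp only [PNat.mk_coe]; omega),
    by simp only [PNat.mk_coe]; omega⟩)

lemma shiftOn_mem_IN {c : ℕ} (hD : ∀ m : ℕ+, c ≤ (m : ℕ) → m ∈ D) : InIN (shiftOn D s t) := by
  refine ⟨shiftOn_isPartialBij, compl_pdom_shiftOn_finite hD, ?_, shiftOn_isIsometry⟩
  rw [← pdom_pinv, pinv_shiftOn]
  exact compl_pdom_shiftOn_finite hD

end shiftOn

lemma shiftOn_mul_shiftOn {D : Set ℕ+} {s t s' t' : ℕ} (h₁ : ShiftClosed D (t - s'))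
    (h₂ : ShiftClosed D (s' - t)) :
    pmul (shiftOn D s' t') (shiftOn D s t) = shiftOn D (s + (s' - t)) (t' + (t - s')) :=
  pmap_ext fun n v => by
    simp only [pmul_eq_some, shiftOn_eq_some]
    constructor
    · rintro ⟨w, ⟨m₁, hm₁, hn, hw⟩, m₂, hm₂, hw', hv⟩
      rcases le_total s' t with h | h
      · exact ⟨m₁, hm₁, by omega, by omega⟩
      · exact ⟨m₂, hm₂, by omega, by omega⟩
    · rintro ⟨m, hm, hn, hv⟩
      obtain ⟨m₁, hm₁, hm₁m⟩ := h₂ m hm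
      obtain ⟨m₂, hm₂, hm₂m⟩ := h₁ m hm
      refine ⟨⟨m₁ + t, by positivity⟩, ⟨m₁, hm₁, by omega, rfl⟩, m₂, hm₂, ?_, by omega⟩
      rw [PNat.mk_coe]
      omega

lemma shiftOn_injective {D : Set ℕ+} (hD : D.Nonempty) {s t s' t' : ℕ}
    (h : shiftOn D s t = shiftOn D s' t') : s = s' ∧ t = t' := by
  obtain ⟨d, hd, hmin⟩ := wellFounded_lt.has_min D hD
  -- evaluating at `d + s` shows `s' ≤ s`, since `d` is the least element of `D`
  have key : ∀ {s t s' t' : ℕ}, shiftOn D s t = shiftOn D s' t' → s' ≤ s ∧ t + s' = t' + s := by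
    intro s t s' t' h
    have hds : shiftOn D s t ⟨d + s, by positivity⟩ = some ⟨d + t, by positivity⟩ :=
      shiftOn_eq_some.mpr ⟨d, hd, rfl, rfl⟩
    obtain ⟨m, hm, hsm, htm⟩ := shiftOn_eq_some.mp (h ▸ hds)
    have hdm : (d : ℕ) ≤ m := PNat.coe_le_coe _ _ |>.mpr (not_lt.mp (hmin m hm))
    simp only [PNat.mk_coe] at hsm htm
    omega
  have := key h
  have := key h.symm
  omega

lemma IsPartialBij.eq_shiftOn_of_idempotent {f : PMapN} (hf : IsPartialBij f)
    (he : pmul f f = f) : f = shiftOn (pdom f) 0 0 :=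
  pmap_ext fun n v => by
    rw [shiftOn_eq_some]
    constructor
    · intro hn
      obtain rfl := hf.eq_of_idempotent he hn
      exact ⟨v, by simp [pdom, hn], rfl, rfl⟩
    · rintro ⟨m, hm, hn, hv⟩
      obtain rfl : n = m := PNat.eq hn
      obtain rfl : v = n := PNat.eq hv
      obtain ⟨w, hw⟩ := Option.ne_none_iff_exists'.mp hm
      rwa [hf.eq_of_idempotent he hw] at hw

lemma exists_forall_le_mem_of_finite_compl {D : Set ℕ+} (hD : Dᶜ.Finite) :
    ∃ c : ℕ, 0 < c ∧ ∀ m : ℕ+, c ≤ (m : ℕ) → m ∈ D := by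
  obtain ⟨N, hN⟩ := hD.bddAbove
  refine ⟨N + 1, N.pos.trans (Nat.lt_succ_self _), fun m hm => by_contra fun hmD => ?_⟩
  have := PNat.coe_le_coe _ _ |>.mpr (hN hmD)
  omega

lemma shiftClosed_mul {D : Set ℕ+} {c : ℕ} (hD : ∀ m : ℕ+, c ≤ (m : ℕ) → m ∈ D) (k : ℕ) :
    ShiftClosed D (k * c) := by
  intro m hm
  rcases k.eq_zero_or_pos with rfl | hk
  · exact ⟨m, hm, by simp⟩
  · have hc : c ≤ k * c := Nat.le_mul_of_pos_left c hk
    exact ⟨⟨m + k * c, by positivity⟩, hD _ (by rw [PNat.mk_coe]; omega), rfl⟩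

/-- The image of `q^a p^b = (a, b)` in `𝐈ℕ∞`. -/
noncomputable def bicyclicRep (D : Set ℕ+) (c : ℕ) (x : ℕ × ℕ) : PMapN :=
  shiftOn D (x.2 * c) (x.1 * c)

section bicyclicRep

variable {D : Set ℕ+} {c : ℕ}

lemma bicyclicRep_bmul (hD : ∀ m : ℕ+, c ≤ (m : ℕ) → m ∈ D) (x y : ℕ × ℕ) :
    bicyclicRep D c (bmul x y) = pmul (bicyclicRep D c x) (bicyclicRep D c y) := by
  obtain ⟨a, b⟩ := x
  obtain ⟨a', b'⟩ := y
  simp only [bicyclicRep, bmul]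
  rw [shiftOn_mul_shiftOn (by rw [← Nat.sub_mul]; exact shiftClosed_mul hD _)
    (by rw [← Nat.sub_mul]; exact shiftClosed_mul hD _), ← Nat.sub_mul, ← Nat.sub_mul,
    ← add_mul, ← add_mul]
  congr 2 <;> omega

lemma bicyclicRep_injective (hc : 0 < c) (hD : D.Nonempty) :
    Function.Injective (bicyclicRep D c) := by
  intro x y h
  obtain ⟨h₂, h₁⟩ := shiftOn_injective hD h
  exact Prod.ext (Nat.mul_right_cancel hc h₁) (Nat.mul_right_cancel hc h₂)

end bicyclicRep

lemma range_eq_genBy {φ : ℕ × ℕ → PMapN} {γ : PMapN}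
    (hφ : ∀ x y, φ (bmul x y) = pmul (φ x) (φ y)) (h01 : φ (0, 1) = γ)
    (h10 : φ (1, 0) = pinv γ) : Set.range φ = {f | GenBy γ f} := by
  ext f
  constructor
  · rintro ⟨⟨a, b⟩, rfl⟩
    have h00 : GenBy γ (φ (0, 0)) := by
      rw [show φ (0, 0) = pmul (φ (0, 1)) (φ (1, 0)) from hφ (0, 1) (1, 0), h01, h10]
      exact .mul _ _ .base .inv
    have h0b : ∀ b, GenBy γ (φ (0, b)) := by
      intro b
      induction b with
      | zero => exact h00
      | succ b ih =>
        rw [show ((0, b + 1) : ℕ × ℕ) = bmul (0, b) (0, 1) by simp [bmul], hφ, h01]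
        exact .mul _ _ ih .base
    induction a with
    | zero => exact h0b b
    | succ a ih =>
      rw [show ((a + 1, b) : ℕ × ℕ) = bmul (1, 0) (a, b) by simp [bmul, add_comm], hφ, h10]
      exact .mul _ _ .inv ih
  · intro hf
    induction hf with
    | base => exact ⟨(0, 1), h01⟩
    | inv => exact ⟨(1, 0), h10⟩
    | mul f g _ _ ihf ihg =>
      obtain ⟨x, rfl⟩ := ihf
      obtain ⟨y, rfl⟩ := ihg
      exact ⟨bmul x y, hφ x y⟩

/-- Every idempotent `ε` of `𝐈ℕ∞` is the unit of a subsemigroup of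
`𝐈ℕ∞` isomorphic to the bicyclic semigroup: there is `γ ∈ 𝐈ℕ∞` with `γγ⁻¹ = ε`,
`γ⁻¹γ ≠ ε`, for which `ε` is a two-sided unit of `γ` and `γ⁻¹`, and the subsemigroup
generated by `γ` and `γ⁻¹` is isomorphic to the bicyclic monoid with identity `ε`. -/
theorem stmt19 (ε : PMapN) (hε : InIN ε) (he : pmul ε ε = ε) :
    ∃ γ : PMapN, InIN γ ∧
      pmul γ (pinv γ) = ε ∧ pmul (pinv γ) γ ≠ ε ∧
      pmul ε γ = γ ∧ pmul γ ε = γ ∧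
      pmul ε (pinv γ) = pinv γ ∧ pmul (pinv γ) ε = pinv γ ∧
      ∃ φ : ℕ × ℕ → PMapN, Function.Injective φ ∧ φ (0, 0) = ε ∧
        (∀ x y, φ (bmul x y) = pmul (φ x) (φ y)) ∧
        Set.range φ = {f | GenBy γ f} := by
  obtain ⟨hbij, hdom, -, -⟩ := hε
  obtain ⟨c, hc, hD⟩ := exists_forall_le_mem_of_finite_compl hdom
  set φ := bicyclicRep (pdom ε) c
  have hφ : ∀ x y, φ (bmul x y) = pmul (φ x) (φ y) := bicyclicRep_bmul hD
  have hinj : Function.Injective φ := bicyclicRep_injective hc ⟨_, hD ⟨c, hc⟩ le_rfl⟩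
  have hφ00 : φ (0, 0) = ε := by
    simpa [φ, bicyclicRep] using (hbij.eq_shiftOn_of_idempotent he).symm
  have hinv : pinv (φ (0, 1)) = φ (1, 0) := by
    simp only [φ, bicyclicRep, pinv_shiftOn]
  refine ⟨φ (0, 1), shiftOn_mem_IN hD, ?_, ?_, ?_, ?_, ?_, ?_,
    φ, hinj, hφ00, hφ, range_eq_genBy hφ rfl hinv.symm⟩
  -- each remaining claim is `φ x * φ y = φ z` with `bmul x y = z` computable by `rfl`
  all_goals
    rw [← hφ00]
    try rw [hinv]
    rw [← hφ]
  · rfl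
  · exact hinj.ne (by decide)
  all_goals rfl
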